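/- arXiv:2101.01300 — 5 statements merged into one kernel-verified Lean document; each statement's English description precedes it below -/
import Mathlib

section
/- Assume ‖x_k^{(0)}‖ = 1 and that the step size satisfies α ≤ 1/(3λ_1(2K−1)). Then for all t ≥ 0, ‖x_k^{(t)}‖ < √3 and (x_k^{(t)})ᵀ C x_k^{(t)} < 1/α. -/
open Matrix Finset

/-!
Expand everything in the eigenbasis `q` of `C`. With coordinates `c i = ⟪q i, x⟫` and
`β = xᵀ C x = ∑ λ c²`, one step multiplies `c i` by `1 - α β + α w i`, where `w i = λ i` except
`w i = 0` for the deflated directions `i < k`. Writing `n = ‖x‖²`, `u = α β` and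
`v = α ∑ w c²`, one gets `0 ≤ v ≤ u ≤ α λ₁ n` and
`‖x'‖² ≤ n (1 - u)² + v (2 + α λ₁ - 2 u)`, which is `< 3` when `n < 3` and `α λ₁ ≤ 1/3`.
By induction `‖x_t‖² < 3`, and then `xᵀ C x ≤ λ₁ ‖x‖² < 3 λ₁ ≤ 1/α`.
-/

/-- Coerce a plain vector into `EuclideanSpace` (they are definitionally equal). -/
def toE {d : ℕ} (v : Fin d → ℝ) : EuclideanSpace ℝ (Fin d) := WithLp.toLp 2 v

theorem EuclideanSpace.norm_sq_eq_dotProduct_self {n : Type*} [Fintype n]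
    (y : EuclideanSpace ℝ n) : ‖y‖ ^ 2 = y.ofLp ⬝ᵥ y.ofLp := by
  rw [← real_inner_self_eq_norm_sq, EuclideanSpace.inner_eq_star_dotProduct, star_trivial]

theorem mul_one_sub_sq_add_mul_lt_three {n u v e : ℝ} (hn0 : 0 ≤ n) (hn3 : n < 3) (hv0 : 0 ≤ v)
    (hvu : v ≤ u) (hue : u ≤ e * n) (he0 : 0 ≤ e) (he : e ≤ 1 / 3) :
    n * (1 - u) ^ 2 + v * (2 + e - 2 * u) < 3 := by
  have hu0 : 0 ≤ u := hv0.trans hvu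
  have hun : u ≤ n / 3 := hue.trans (by nlinarith)
  have hv : v * (2 + e - 2 * u) ≤ u * (7 / 3 - 2 * u) := by nlinarith
  have key : n * (1 - u) ^ 2 + u * (7 / 3 - 2 * u) < 3 := by
    rcases le_or_gt (7 / 3) n with h | h
    · nlinarith [mul_nonneg hu0 (sub_nonneg.mpr h)]
    · nlinarith [sq_nonneg (1 - u)]
  linarith

theorem sum_sq_deflated_hebbian_coord_lt_three {ι : Type*} (s : Finset ι) (c lam w : ι → ℝ)
    {L α : ℝ} (hL : 0 ≤ L) (hα : 0 ≤ α) (hαL : α * L ≤ 1 / 3) (hlam : ∀ i ∈ s, lam i ≤ L)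
    (hw : ∀ i ∈ s, 0 ≤ w i ∧ w i ≤ lam i) (hc : ∑ i ∈ s, c i ^ 2 < 3) :
    ∑ i ∈ s, ((1 - α * ∑ j ∈ s, lam j * c j ^ 2 + α * w i) * c i) ^ 2 < 3 := by
  set n := ∑ i ∈ s, c i ^ 2
  set β := ∑ j ∈ s, lam j * c j ^ 2
  set γ := ∑ i ∈ s, w i * c i ^ 2
  have hexpand : ∑ i ∈ s, ((1 - α * β + α * w i) * c i) ^ 2 =
      (1 - α * β) ^ 2 * n + 2 * (1 - α * β) * (α * γ) + α ^ 2 * ∑ i ∈ s, w i ^ 2 * c i ^ 2 := by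
    simp only [n, γ, mul_sum, ← sum_add_distrib]
    exact sum_congr rfl fun i _ => by ring
  have hn0 : 0 ≤ n := sum_nonneg fun i _ => sq_nonneg (c i)
  have hγ0 : 0 ≤ γ := sum_nonneg fun i hi => mul_nonneg (hw i hi).1 (sq_nonneg (c i))
  have hγβ : γ ≤ β := sum_le_sum fun i hi => mul_le_mul_of_nonneg_right (hw i hi).2 (sq_nonneg _)
  have hβn : β ≤ L * n := by
    rw [mul_sum]
    exact sum_le_sum fun i hi => mul_le_mul_of_nonneg_right (hlam i hi) (sq_nonneg _)
  have hwγ : ∑ i ∈ s, w i ^ 2 * c i ^ 2 ≤ L * γ := by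
    rw [mul_sum]
    refine sum_le_sum fun i hi => ?_
    have hwL : 0 ≤ (L - w i) * w i * c i ^ 2 :=
      mul_nonneg (mul_nonneg (sub_nonneg.2 ((hw i hi).2.trans (hlam i hi))) (hw i hi).1)
        (sq_nonneg _)
    linarith
  have hbound := mul_one_sub_sq_add_mul_lt_three hn0 hc (mul_nonneg hα hγ0)
    (mul_le_mul_of_nonneg_left hγβ hα) (by nlinarith) (mul_nonneg hα hL) hαL
  rw [hexpand]
  nlinarith [mul_le_mul_of_nonneg_left hwγ (sq_nonneg α)]

section Spectral

variable {ι n : Type*} [DecidableEq ι] [Fintype n]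

theorem dotProduct_eq_sum_mul_of_orthonormal (s : Finset ι) (v : ι → n → ℝ)
    (horth : ∀ i ∈ s, ∀ j ∈ s, v i ⬝ᵥ v j = if i = j then 1 else 0)
    (hcard : s.card = Fintype.card n) (y z : n → ℝ) :
    y ⬝ᵥ z = ∑ i ∈ s, (v i ⬝ᵥ y) * (v i ⬝ᵥ z) := by
  classical
  let Q : Matrix s n ℝ := of fun i => v i
  have hQQt : Q * Qᵀ = 1 := by
    ext i j
    simp only [one_apply, Subtype.ext_iff, ← horth i i.2 j j.2]
    rfl
  have hQtQ : Qᵀ * Q = 1 :=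
    (mul_eq_one_comm_of_equiv (s.equivFin.trans ((finCongr hcard).trans
      (Fintype.equivFin n).symm))).mp hQQt
  calc y ⬝ᵥ z = y ⬝ᵥ (Qᵀ * Q) *ᵥ z := by rw [hQtQ, one_mulVec]
    _ = (Q *ᵥ y) ⬝ᵥ (Q *ᵥ z) := by
      rw [← mulVec_mulVec, dotProduct_mulVec, vecMul_transpose, dotProduct_comm]
    _ = ∑ i ∈ s, (v i ⬝ᵥ y) * (v i ⬝ᵥ z) := sum_coe_sort s fun i => (v i ⬝ᵥ y) * (v i ⬝ᵥ z)

variable {C : Matrix n n ℝ}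

theorem dotProduct_mulVec_of_mulVec_eq_smul (hC : C.IsHermitian) {v : n → ℝ} {μ : ℝ}
    (hv : C *ᵥ v = μ • v) (y : n → ℝ) : v ⬝ᵥ C *ᵥ y = μ * (v ⬝ᵥ y) := by
  rw [dotProduct_mulVec, ← mulVec_transpose, ← conjTranspose_eq_transpose_of_trivial, hC.eq, hv,
    smul_dotProduct, smul_eq_mul]

/-- The modified GHA update, deflating the directions `v p`, `p ∈ P`. -/
def deflatedHebbianStep (C : Matrix n n ℝ) (v : ι → n → ℝ) (P : Finset ι) (α : ℝ)
    (y : n → ℝ) : n → ℝ :=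
  y + α • (C *ᵥ y - (y ⬝ᵥ C *ᵥ y) • y - ∑ p ∈ P, (v p ⬝ᵥ C *ᵥ y) • v p)

variable {s P : Finset ι} {v : ι → n → ℝ} {lam : ι → ℝ}

theorem dotProduct_mulVec_self_eq_sum (hC : C.IsHermitian)
    (horth : ∀ i ∈ s, ∀ j ∈ s, v i ⬝ᵥ v j = if i = j then 1 else 0)
    (hcard : s.card = Fintype.card n) (heig : ∀ i ∈ s, C *ᵥ v i = lam i • v i) (y : n → ℝ) :
    y ⬝ᵥ C *ᵥ y = ∑ i ∈ s, lam i * (v i ⬝ᵥ y) ^ 2 := by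
  rw [dotProduct_eq_sum_mul_of_orthonormal s v horth hcard]
  refine sum_congr rfl fun i hi => ?_
  rw [dotProduct_mulVec_of_mulVec_eq_smul hC (heig i hi)]
  ring

theorem dotProduct_mulVec_self_le (hC : C.IsHermitian)
    (horth : ∀ i ∈ s, ∀ j ∈ s, v i ⬝ᵥ v j = if i = j then 1 else 0)
    (hcard : s.card = Fintype.card n) (heig : ∀ i ∈ s, C *ᵥ v i = lam i • v i) {L : ℝ}
    (hlam : ∀ i ∈ s, lam i ≤ L) (y : n → ℝ) : y ⬝ᵥ C *ᵥ y ≤ L * (y ⬝ᵥ y) := by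
  rw [dotProduct_mulVec_self_eq_sum hC horth hcard heig,
    dotProduct_eq_sum_mul_of_orthonormal s v horth hcard y y, mul_sum]
  exact sum_le_sum fun i hi => by
    rw [← sq]; exact mul_le_mul_of_nonneg_right (hlam i hi) (sq_nonneg _)

theorem dotProduct_deflatedHebbianStep (hC : C.IsHermitian)
    (horth : ∀ i ∈ s, ∀ j ∈ s, v i ⬝ᵥ v j = if i = j then 1 else 0)
    (heig : ∀ i ∈ s, C *ᵥ v i = lam i • v i) (hP : P ⊆ s) (α : ℝ) (y : n → ℝ)
    {i : ι} (hi : i ∈ s) :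
    v i ⬝ᵥ deflatedHebbianStep C v P α y =
      (1 - α * (y ⬝ᵥ C *ᵥ y) + α * (if i ∈ P then 0 else lam i)) * (v i ⬝ᵥ y) := by
  have hdefl : v i ⬝ᵥ ∑ p ∈ P, (v p ⬝ᵥ C *ᵥ y) • v p =
      if i ∈ P then lam i * (v i ⬝ᵥ y) else 0 := by
    rw [dotProduct_sum, sum_congr rfl fun p hp => by
      rw [dotProduct_smul, horth i hi p (hP hp), smul_eq_mul, mul_ite, mul_one, mul_zero]]
    rw [sum_ite_eq, dotProduct_mulVec_of_mulVec_eq_smul hC (heig i hi)]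
  rw [deflatedHebbianStep, dotProduct_add, dotProduct_smul, dotProduct_sub, dotProduct_sub, hdefl,
    dotProduct_smul, dotProduct_mulVec_of_mulVec_eq_smul hC (heig i hi), smul_eq_mul, smul_eq_mul]
  split_ifs <;> ring

theorem deflatedHebbianStep_dotProduct_self_lt_three (hC : C.IsHermitian)
    (horth : ∀ i ∈ s, ∀ j ∈ s, v i ⬝ᵥ v j = if i = j then 1 else 0)
    (hcard : s.card = Fintype.card n) (heig : ∀ i ∈ s, C *ᵥ v i = lam i • v i) (hP : P ⊆ s)
    {L α : ℝ} (hL : 0 ≤ L) (hα : 0 ≤ α) (hαL : α * L ≤ 1 / 3)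
    (hlam : ∀ i ∈ s, 0 ≤ lam i ∧ lam i ≤ L)
    {y : n → ℝ} (hy : y ⬝ᵥ y < 3) :
    deflatedHebbianStep C v P α y ⬝ᵥ deflatedHebbianStep C v P α y < 3 := by
  rw [dotProduct_eq_sum_mul_of_orthonormal s v horth hcard] at hy ⊢
  simp only [← sq] at hy ⊢
  rw [sum_congr rfl fun i hi => by rw [dotProduct_deflatedHebbianStep hC horth heig hP α y hi],
    dotProduct_mulVec_self_eq_sum hC horth hcard heig]
  refine sum_sq_deflated_hebbian_coord_lt_three s _ _ _ hL hα hαL (fun i hi => (hlam i hi).2)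
    (fun i hi => ?_) hy
  split_ifs
  exacts [⟨le_rfl, (hlam i hi).1⟩, ⟨(hlam i hi).1, le_rfl⟩]

end Spectral

theorem modified_GHA_bounded_iterates_general
    (d K : ℕ) (hK1 : 1 ≤ K) (hKd : K < d)
    (C : Matrix (Fin d) (Fin d) ℝ) (hC : C.PosSemidef)
    (lam : ℕ → ℝ) (q : ℕ → EuclideanSpace ℝ (Fin d))
    (horth : ∀ l l', 1 ≤ l → l ≤ d → 1 ≤ l' → l' ≤ d →
      (q l) ⬝ᵥ (q l' : Fin d → ℝ) = if l = l' then 1 else 0)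
    (heig : ∀ l, 1 ≤ l → l ≤ d → C.mulVec (q l) = lam l • (q l : Fin d → ℝ))
    (hmono : ∀ l l', 1 ≤ l → l ≤ l' → l' ≤ d → lam l' ≤ lam l)
    (hnonneg : ∀ l, 1 ≤ l → l ≤ d → 0 ≤ lam l)
    (hKpos : 0 < lam K)
    (k : ℕ) (hkK : k ≤ K)
    (α : ℝ) (hα : 0 < α)
    (x : ℕ → EuclideanSpace ℝ (Fin d))
    (hiter : ∀ t, x (t + 1) = x t + α •
      (toE (C.mulVec (x t)) - ((x t) ⬝ᵥ C.mulVec (x t)) • x t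
        - ∑ p ∈ Finset.Icc 1 (k - 1), ((q p) ⬝ᵥ C.mulVec (x t)) • q p))
    (hstep : α ≤ 1 / (3 * lam 1 * (2 * (K : ℝ) - 1)))
    (hnorm0 : ‖x 0‖ = 1) :
    ∀ t, ‖x t‖ < Real.sqrt 3 ∧ (x t) ⬝ᵥ C.mulVec (x t) < 1 / α := by
  have horth' : ∀ i ∈ Icc 1 d, ∀ j ∈ Icc 1 d, (q i).ofLp ⬝ᵥ (q j).ofLp = if i = j then 1 else 0 :=
    fun i hi j hj => horth i j (mem_Icc.1 hi).1 (mem_Icc.1 hi).2 (mem_Icc.1 hj).1 (mem_Icc.1 hj).2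
  have heig' : ∀ i ∈ Icc 1 d, C *ᵥ (q i).ofLp = lam i • (q i).ofLp :=
    fun i hi => heig i (mem_Icc.1 hi).1 (mem_Icc.1 hi).2
  have hcard : (Icc 1 d).card = Fintype.card (Fin d) := by simp
  have hlam : ∀ i ∈ Icc 1 d, 0 ≤ lam i ∧ lam i ≤ lam 1 := fun i hi => by
    obtain ⟨h1, hd⟩ := mem_Icc.1 hi
    exact ⟨hnonneg i h1 hd, hmono 1 i le_rfl h1 hd⟩
  have hlam1 : 0 < lam 1 := hKpos.trans_le (hmono 1 K le_rfl hK1 hKd.le)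
  have hαlam : α * lam 1 ≤ 1 / 3 := by
    have hK : (1 : ℝ) ≤ 2 * K - 1 := by
      have : (1 : ℝ) ≤ K := by exact_mod_cast hK1
      linarith
    rw [le_div_iff₀ (by positivity)] at hstep
    nlinarith
  have hsq : ∀ t, ‖x t‖ ^ 2 < 3 := by
    intro t
    induction t with
    | zero => simp [hnorm0]
    | succ t ih =>
      have hx : (x (t + 1)).ofLp =
          deflatedHebbianStep C (fun l => (q l).ofLp) (Icc 1 (k - 1)) α (x t).ofLp := by
        simp [hiter t, deflatedHebbianStep, toE, WithLp.ofLp_sum]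
      rw [EuclideanSpace.norm_sq_eq_dotProduct_self] at ih ⊢
      rw [hx]
      exact deflatedHebbianStep_dotProduct_self_lt_three hC.1 horth' hcard heig'
        (Icc_subset_Icc_right (by omega)) hlam1.le hα.le hαlam hlam ih
  refine fun t => ⟨(Real.lt_sqrt (norm_nonneg _)).2 (hsq t), ?_⟩
  calc (x t).ofLp ⬝ᵥ C *ᵥ x t ≤ lam 1 * ‖x t‖ ^ 2 := by
        rw [EuclideanSpace.norm_sq_eq_dotProduct_self]
        exact dotProduct_mulVec_self_le hC.1 horth' hcard heig' (fun i hi => (hlam i hi).2) _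
    _ < lam 1 * 3 := mul_lt_mul_of_pos_left (hsq t) hlam1
    _ ≤ 1 / α := by rw [le_div_iff₀ hα]; linarith

/-- Lemma 1 of the paper: with a unit-norm initialization and
step size `α ≤ 1/(3 λ₁ (2K−1))`, the modified GHA iterates satisfy
`‖x_k^{(t)}‖ < √3` and `(x_k^{(t)})ᵀ C x_k^{(t)} < 1/α` for all `t`. -/
theorem modified_GHA_bounded_iterates
    (d K : ℕ) (hK1 : 1 ≤ K) (hKd : K < d)
    (C : Matrix (Fin d) (Fin d) ℝ) (hC : C.PosSemidef)
    (lam : ℕ → ℝ) (q : ℕ → EuclideanSpace ℝ (Fin d))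
    (horth : ∀ l l', 1 ≤ l → l ≤ d → 1 ≤ l' → l' ≤ d →
      (q l) ⬝ᵥ (q l' : Fin d → ℝ) = if l = l' then 1 else 0)
    (heig : ∀ l, 1 ≤ l → l ≤ d → C.mulVec (q l) = lam l • (q l : Fin d → ℝ))
    (hstrict : ∀ l l', 1 ≤ l → l < l' → l' ≤ d → l ≤ K → lam l' < lam l)
    (hmono : ∀ l l', 1 ≤ l → l ≤ l' → l' ≤ d → lam l' ≤ lam l)
    (hnonneg : ∀ l, 1 ≤ l → l ≤ d → 0 ≤ lam l)
    (hKpos : 0 < lam K)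
    (k : ℕ) (hk1 : 1 ≤ k) (hkK : k ≤ K)
    (α : ℝ) (hα : 0 < α)
    (x : ℕ → EuclideanSpace ℝ (Fin d))
    (hiter : ∀ t, x (t + 1) = x t + α •
      (toE (C.mulVec (x t)) - ((x t) ⬝ᵥ C.mulVec (x t)) • x t
        - ∑ p ∈ Finset.Icc 1 (k - 1), ((q p) ⬝ᵥ C.mulVec (x t)) • q p))
    (hstep : α ≤ 1 / (3 * lam 1 * (2 * (K : ℝ) - 1)))
    (hnorm0 : ‖x 0‖ = 1) :
    ∀ t, ‖x t‖ < Real.sqrt 3 ∧ (x t) ⬝ᵥ C.mulVec (x t) < 1 / α :=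
  modified_GHA_bounded_iterates_general d K hK1 hKd C hC lam q horth heig hmono hnonneg hKpos k hkK
    α hα x hiter hstep hnorm0
end

section
/- Suppose q_kᵀ x_k^{(0)} ≠ 0, ‖x_k^{(0)}‖ = 1, and for all t ≥ 0 the iterates satisfy ‖x_k^{(t)}‖ ≤ √3 and (x_k^{(t)})ᵀ C x_k^{(t)} < 1/α. Then with ρ_k = ((1 + αλ_{k+1})/(1 + αλ_k))² < 1 and a_2 = 3(d−k)/(q_kᵀ x_k^{(0)})², one has for all t ≥ 0: Σ_{l=k+1}^{d} (z_{k,l}^{(t)})² ≤ a_2 ρ_k^t. -/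
open Matrix Finset

/-!
Along an eigenvector `q_l` with `l ≥ k` the deflation term of the modified GHA vanishes, so each
coefficient evolves by a scalar factor, `z_l(t+1) = (1 + α (λ_l - σ_t)) z_l(t)` with
`σ_t = x_tᵀ C x_t`. As `0 ≤ α σ_t < 1`, the factor for `l > k` is dominated by the factor for
`l = k` times `(1 + αλ_{k+1}) / (1 + αλ_k)`, uniformly in `t`. Hence `z_l(t)² / z_k(t)²` decays
like `ρ_k^t`, and the bounds `z_l(0)² ≤ ‖x_0‖² = 1`, `z_k(t)² ≤ ‖x_t‖² ≤ 3` give the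
estimate.
-/

section Rate

variable {α σ μ ν κ : ℝ}

lemma one_add_mul_div_one_add_mul_sq_lt_one (hα : 0 < α) (hν : 0 ≤ ν) (hνκ : ν < κ) :
    ((1 + α * ν) / (1 + α * κ)) ^ 2 < 1 := by
  have hνpos : 0 < 1 + α * ν := by nlinarith
  have hlt : 1 + α * ν < 1 + α * κ := by nlinarith
  exact pow_lt_one₀ (div_nonneg hνpos.le (hνpos.trans hlt).le)
    ((div_lt_one (hνpos.trans hlt)).2 hlt) two_ne_zero

lemma sq_one_add_mul_sub_le (hα : 0 ≤ α) (hσ : 0 ≤ σ) (hασ : α * σ < 1) (hμ : 0 ≤ μ)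
    (hμν : μ ≤ ν) (hνκ : ν ≤ κ) :
    (1 + α * (μ - σ)) ^ 2 ≤ ((1 + α * ν) / (1 + α * κ)) ^ 2 * (1 + α * (κ - σ)) ^ 2 := by
  have hκpos : 0 < 1 + α * κ := by nlinarith
  have hμσ : 0 ≤ 1 + α * (μ - σ) := by nlinarith
  have hle : 1 + α * (μ - σ) ≤ (1 + α * ν) / (1 + α * κ) * (1 + α * (κ - σ)) := by
    rw [div_mul_eq_mul_div, le_div_iff₀ hκpos]
    -- the difference of the two sides is `α (ν - μ) (1 + ακ) + α² σ (κ - ν)`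
    nlinarith [mul_nonneg (mul_nonneg hα (sub_nonneg.2 hμν)) hκpos.le,
      mul_nonneg (mul_nonneg (mul_nonneg hα hα) hσ) (sub_nonneg.2 hνκ)]
  rw [← mul_pow]
  exact pow_le_pow_left₀ hμσ hle 2

end Rate

section Ratio

variable {u v a b : ℕ → ℝ} {ρ : ℝ}

lemma sq_mul_sq_le_pow_mul_of_sq_le_mul_sq (hρ : 0 ≤ ρ)
    (hu : ∀ t, u (t + 1) = a t * u t) (hv : ∀ t, v (t + 1) = b t * v t)
    (hab : ∀ t, a t ^ 2 ≤ ρ * b t ^ 2) (t : ℕ) :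
    u t ^ 2 * v 0 ^ 2 ≤ ρ ^ t * (u 0 ^ 2 * v t ^ 2) := by
  induction t with
  | zero => simp
  | succ t ih =>
    calc u (t + 1) ^ 2 * v 0 ^ 2 = a t ^ 2 * (u t ^ 2 * v 0 ^ 2) := by rw [hu]; ring
      _ ≤ a t ^ 2 * (ρ ^ t * (u 0 ^ 2 * v t ^ 2)) := by gcongr
      _ ≤ ρ * b t ^ 2 * (ρ ^ t * (u 0 ^ 2 * v t ^ 2)) := by gcongr; exact hab t
      _ = ρ ^ (t + 1) * (u 0 ^ 2 * v (t + 1) ^ 2) := by rw [hv]; ring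

lemma sq_le_div_mul_pow_of_sq_le_mul_sq {M N : ℝ} (hρ : 0 ≤ ρ)
    (hu : ∀ t, u (t + 1) = a t * u t) (hv : ∀ t, v (t + 1) = b t * v t)
    (hab : ∀ t, a t ^ 2 ≤ ρ * b t ^ 2) (hv₀ : v 0 ≠ 0) (hu₀ : u 0 ^ 2 ≤ M) (t : ℕ)
    (hvt : v t ^ 2 ≤ N) :
    u t ^ 2 ≤ M * N / v 0 ^ 2 * ρ ^ t := by
  rw [div_mul_eq_mul_div, le_div_iff₀ (by positivity)]
  calc u t ^ 2 * v 0 ^ 2 ≤ ρ ^ t * (u 0 ^ 2 * v t ^ 2) :=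
        sq_mul_sq_le_pow_mul_of_sq_le_mul_sq hρ hu hv hab t
    _ ≤ ρ ^ t * (M * N) := by gcongr; exact (sq_nonneg _).trans hu₀
    _ = M * N * ρ ^ t := mul_comm _ _

end Ratio

lemma Matrix.IsSymm.dotProduct_mulVec_of_mulVec_eq_smul {R n : Type*} [CommSemiring R]
    [Fintype n] {A : Matrix n n R} (hA : A.IsSymm) {q : n → R} {μ : R} (hq : A *ᵥ q = μ • q)
    (v : n → R) : q ⬝ᵥ A *ᵥ v = μ * (q ⬝ᵥ v) := by
  rw [dotProduct_mulVec, ← mulVec_transpose, hA.eq, hq, smul_dotProduct, smul_eq_mul]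

lemma EuclideanSpace.sq_dotProduct_le_sq_norm {ι : Type*} [Fintype ι]
    {u : EuclideanSpace ℝ ι} (hu : u ⬝ᵥ (u : ι → ℝ) = 1) (v : EuclideanSpace ℝ ι) :
    (u ⬝ᵥ (v : ι → ℝ)) ^ 2 ≤ ‖v‖ ^ 2 := by
  have huv : u ⬝ᵥ (v : ι → ℝ) = inner ℝ v u := by
    rw [EuclideanSpace.inner_eq_star_dotProduct, star_trivial]
  have hu_norm : ‖u‖ = 1 := by
    rw [← pow_eq_one_iff_of_nonneg (norm_nonneg u) two_ne_zero, ← real_inner_self_eq_norm_sq,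
      EuclideanSpace.inner_eq_star_dotProduct, star_trivial, hu]
  rw [huv, ← sq_abs]
  exact pow_le_pow_left₀ (abs_nonneg _) (by simpa [hu_norm] using abs_real_inner_le_norm v u) 2

lemma dotProduct_modified_GHA_step {d : ℕ} {C : Matrix (Fin d) (Fin d) ℝ} (hC : C.IsSymm)
    {q : ℕ → EuclideanSpace ℝ (Fin d)} {s : Finset ℕ} {l : ℕ} {μ : ℝ}
    (hq : C *ᵥ q l = μ • (q l : Fin d → ℝ)) (horth : ∀ p ∈ s, q l ⬝ᵥ (q p : Fin d → ℝ) = 0)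
    (α : ℝ) (x : EuclideanSpace ℝ (Fin d)) :
    q l ⬝ᵥ ((x + α • (toE (C *ᵥ x) - (x ⬝ᵥ C *ᵥ x) • x
        - ∑ p ∈ s, (q p ⬝ᵥ C *ᵥ x) • q p) : EuclideanSpace ℝ (Fin d)) : Fin d → ℝ)
      = (1 + α * (μ - x ⬝ᵥ C *ᵥ x)) * (q l ⬝ᵥ (x : Fin d → ℝ)) := by
  have hdefl : q l ⬝ᵥ (∑ p ∈ s, (q p ⬝ᵥ C *ᵥ x) • (q p : Fin d → ℝ)) = 0 := by
    rw [dotProduct_sum]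
    exact Finset.sum_eq_zero fun p hp => by rw [dotProduct_smul, horth p hp, smul_zero]
  simp only [WithLp.ofLp_add, WithLp.ofLp_smul, WithLp.ofLp_sub, WithLp.ofLp_sum, toE,
    dotProduct_add, dotProduct_smul, dotProduct_sub, hdefl,
    hC.dotProduct_mulVec_of_mulVec_eq_smul hq, smul_eq_mul]
  ring

lemma modified_GHA_coeff_succ {d : ℕ} {C : Matrix (Fin d) (Fin d) ℝ} (hC : C.IsSymm)
    {lam : ℕ → ℝ} {q : ℕ → EuclideanSpace ℝ (Fin d)}
    (horth : ∀ l l', 1 ≤ l → l ≤ d → 1 ≤ l' → l' ≤ d →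
      (q l) ⬝ᵥ (q l' : Fin d → ℝ) = if l = l' then 1 else 0)
    (heig : ∀ l, 1 ≤ l → l ≤ d → C.mulVec (q l) = lam l • (q l : Fin d → ℝ))
    {k : ℕ} (hk1 : 1 ≤ k) {α : ℝ} {x : ℕ → EuclideanSpace ℝ (Fin d)}
    (hiter : ∀ t, x (t + 1) = x t + α •
      (toE (C.mulVec (x t)) - ((x t) ⬝ᵥ C.mulVec (x t)) • x t
        - ∑ p ∈ Finset.Icc 1 (k - 1), ((q p) ⬝ᵥ C.mulVec (x t)) • q p))
    (l : ℕ) (hkl : k ≤ l) (hld : l ≤ d) (t : ℕ) :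
    q l ⬝ᵥ (x (t + 1) : Fin d → ℝ)
      = (1 + α * (lam l - x t ⬝ᵥ C *ᵥ x t)) * (q l ⬝ᵥ (x t : Fin d → ℝ)) := by
  rw [hiter t]
  refine dotProduct_modified_GHA_step hC (heig l (by omega) hld) (fun p hp => ?_) α (x t)
  rw [Finset.mem_Icc] at hp
  simpa [show l ≠ p by omega] using horth l p (by omega) hld hp.1 (by omega)

theorem modified_GHA_upper_coeff_decay_general
    (d K : ℕ) (hKd : K < d)
    (C : Matrix (Fin d) (Fin d) ℝ) (hC : C.PosSemidef)
    (lam : ℕ → ℝ) (q : ℕ → EuclideanSpace ℝ (Fin d))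
    (horth : ∀ l l', 1 ≤ l → l ≤ d → 1 ≤ l' → l' ≤ d →
      (q l) ⬝ᵥ (q l' : Fin d → ℝ) = if l = l' then 1 else 0)
    (heig : ∀ l, 1 ≤ l → l ≤ d → C.mulVec (q l) = lam l • (q l : Fin d → ℝ))
    (hstrict : ∀ l l', 1 ≤ l → l < l' → l' ≤ d → l ≤ K → lam l' < lam l)
    (hmono : ∀ l l', 1 ≤ l → l ≤ l' → l' ≤ d → lam l' ≤ lam l)
    (hnonneg : ∀ l, 1 ≤ l → l ≤ d → 0 ≤ lam l)
    (k : ℕ) (hk1 : 1 ≤ k) (hkK : k ≤ K)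
    (α : ℝ) (hα : 0 < α)
    (x : ℕ → EuclideanSpace ℝ (Fin d))
    (hiter : ∀ t, x (t + 1) = x t + α •
      (toE (C.mulVec (x t)) - ((x t) ⬝ᵥ C.mulVec (x t)) • x t
        - ∑ p ∈ Finset.Icc 1 (k - 1), ((q p) ⬝ᵥ C.mulVec (x t)) • q p))
    (hinit : (q k) ⬝ᵥ (x 0 : Fin d → ℝ) ≠ 0)
    (hnorm0 : ‖x 0‖ = 1)
    (hbound : ∀ t, ‖x t‖ ≤ Real.sqrt 3 ∧ (x t) ⬝ᵥ C.mulVec (x t) < 1 / α) :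
    ((1 + α * lam (k + 1)) / (1 + α * lam k)) ^ 2 < 1 ∧
      ∀ t, ∑ l ∈ Finset.Icc (k + 1) d, ((q l) ⬝ᵥ (x t : Fin d → ℝ)) ^ 2 ≤
        (3 * ((d : ℝ) - (k : ℝ)) / ((q k) ⬝ᵥ (x 0 : Fin d → ℝ)) ^ 2)
          * (((1 + α * lam (k + 1)) / (1 + α * lam k)) ^ 2) ^ t := by
  have hkd : k < d := hkK.trans_lt hKd
  have hgap : lam (k + 1) < lam k := hstrict k (k + 1) hk1 k.lt_succ_self hkd hkK
  have hsymm : C.IsSymm := isHermitian_iff_isSymm.1 hC.isHermitian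
  have hcoeff := modified_GHA_coeff_succ hsymm horth heig hk1 hiter
  have hcoeff_sq : ∀ l, 1 ≤ l → l ≤ d → ∀ t, (q l ⬝ᵥ (x t : Fin d → ℝ)) ^ 2 ≤ ‖x t‖ ^ 2 :=
    fun l h1 h2 t =>
      EuclideanSpace.sq_dotProduct_le_sq_norm (by simpa using horth l l h1 h2 h1 h2) (x t)
  have hfactor : ∀ l, k + 1 ≤ l → l ≤ d → ∀ t,
      (1 + α * (lam l - x t ⬝ᵥ C *ᵥ x t)) ^ 2 ≤ ((1 + α * lam (k + 1)) / (1 + α * lam k)) ^ 2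
        * (1 + α * (lam k - x t ⬝ᵥ C *ᵥ x t)) ^ 2 := fun l hkl hld t =>
    sq_one_add_mul_sub_le hα.le (by simpa using hC.dotProduct_mulVec_nonneg (x t))
      ((mul_comm _ _).trans_lt ((lt_div_iff₀ hα).1 (hbound t).2)) (hnonneg l (by omega) hld)
      (hmono (k + 1) l (by omega) hkl hld) hgap.le
  refine ⟨one_add_mul_div_one_add_mul_sq_lt_one hα (hnonneg _ (by omega) hkd) hgap, fun t => ?_⟩
  set ρ := ((1 + α * lam (k + 1)) / (1 + α * lam k)) ^ 2
  have hterm : ∀ l ∈ Finset.Icc (k + 1) d,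
      (q l ⬝ᵥ (x t : Fin d → ℝ)) ^ 2 ≤ 1 * 3 / (q k ⬝ᵥ (x 0 : Fin d → ℝ)) ^ 2 * ρ ^ t := by
    intro l hl
    rw [Finset.mem_Icc] at hl
    refine sq_le_div_mul_pow_of_sq_le_mul_sq (u := fun t => q l ⬝ᵥ (x t : Fin d → ℝ))
      (v := fun t => q k ⬝ᵥ (x t : Fin d → ℝ)) (sq_nonneg _) (hcoeff l (by omega) hl.2)
      (hcoeff k le_rfl hkd.le) (hfactor l hl.1 hl.2) hinit ?_ t ?_
    · simpa [hnorm0] using hcoeff_sq l (by omega) hl.2 0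
    · exact (hcoeff_sq k hk1 hkd.le t).trans
        ((Real.le_sqrt (norm_nonneg _) zero_le_three).1 (hbound t).1)
  calc _ ≤ (Finset.Icc (k + 1) d).card • (1 * 3 / (q k ⬝ᵥ (x 0 : Fin d → ℝ)) ^ 2 * ρ ^ t) :=
        Finset.sum_le_card_nsmul _ _ _ hterm
    _ = _ := by
      rw [Nat.card_Icc, nsmul_eq_mul, Nat.cast_sub (by omega)]
      push_cast
      ring

/-- Lemma 4 of the paper: linear decay of the higher-order
eigenbasis coefficients `z_{k,l}^{(t)} = q_lᵀ x_k^{(t)}`, `l = k+1, …, d`, of the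
modified GHA iterates, with rate `ρ_k = ((1+αλ_{k+1})/(1+αλ_k))² < 1` and constant
`a₂ = 3(d−k)/(q_kᵀ x_k^{(0)})²`. -/
theorem modified_GHA_upper_coeff_decay
    (d K : ℕ) (hK1 : 1 ≤ K) (hKd : K < d)
    (C : Matrix (Fin d) (Fin d) ℝ) (hC : C.PosSemidef)
    (lam : ℕ → ℝ) (q : ℕ → EuclideanSpace ℝ (Fin d))
    (horth : ∀ l l', 1 ≤ l → l ≤ d → 1 ≤ l' → l' ≤ d →
      (q l) ⬝ᵥ (q l' : Fin d → ℝ) = if l = l' then 1 else 0)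
    (heig : ∀ l, 1 ≤ l → l ≤ d → C.mulVec (q l) = lam l • (q l : Fin d → ℝ))
    (hstrict : ∀ l l', 1 ≤ l → l < l' → l' ≤ d → l ≤ K → lam l' < lam l)
    (hmono : ∀ l l', 1 ≤ l → l ≤ l' → l' ≤ d → lam l' ≤ lam l)
    (hnonneg : ∀ l, 1 ≤ l → l ≤ d → 0 ≤ lam l)
    (hKpos : 0 < lam K)
    (k : ℕ) (hk1 : 1 ≤ k) (hkK : k ≤ K)
    (α : ℝ) (hα : 0 < α)
    (x : ℕ → EuclideanSpace ℝ (Fin d))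
    (hiter : ∀ t, x (t + 1) = x t + α •
      (toE (C.mulVec (x t)) - ((x t) ⬝ᵥ C.mulVec (x t)) • x t
        - ∑ p ∈ Finset.Icc 1 (k - 1), ((q p) ⬝ᵥ C.mulVec (x t)) • q p))
    (hinit : (q k) ⬝ᵥ (x 0 : Fin d → ℝ) ≠ 0)
    (hnorm0 : ‖x 0‖ = 1)
    (hbound : ∀ t, ‖x t‖ ≤ Real.sqrt 3 ∧ (x t) ⬝ᵥ C.mulVec (x t) < 1 / α) :
    ((1 + α * lam (k + 1)) / (1 + α * lam k)) ^ 2 < 1 ∧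
      ∀ t, ∑ l ∈ Finset.Icc (k + 1) d, ((q l) ⬝ᵥ (x t : Fin d → ℝ)) ^ 2 ≤
        (3 * ((d : ℝ) - (k : ℝ)) / ((q k) ⬝ᵥ (x 0 : Fin d → ℝ)) ^ 2)
          * (((1 + α * lam (k + 1)) / (1 + α * lam k)) ^ 2) ^ t :=
  modified_GHA_upper_coeff_decay_general d K hKd C hC lam q horth heig hstrict hmono hnonneg k hk1
    hkK α hα x hiter hinit hnorm0 hbound
end

section
/- Suppose q_kᵀ x_k^{(0)} ≠ 0, ‖x_k^{(0)}‖ = 1, and for all t ≥ 0 the iterates satisfy ‖x_k^{(t)}‖ ≤ √3 and η < (x_k^{(t)})ᵀ C x_k^{(t)} < 1/α, where η = min{ (1 − 3αλ_1)² λ_m , (x̃_k^{(0)})ᵀ C x̃_k^{(0)} } > 0. Then the Rayleigh quotient converges to λ_k at a linear rate: there exist constants a_4 > 0 and θ ∈ (0,1) such that for all t ≥ 0, |λ_k − (x_k^{(t)})ᵀ C x_k^{(t)}| ≤ a_4 θ^t. -/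
/-!
In the eigenbasis of `C` the iteration is diagonal: the coefficient `z_l` of `x^{(t)}` along `q_l`
is multiplied by `1 - α R_t` if `l < k` and by `1 + α (λ_l - R_t)` if `l ≥ k`, where `R_t` is the
Rayleigh quotient. As `α η < α R_t < 1`, the coefficients below `k` decay like `(1 - α η)^t`, and
the ratios `z_l / z_k` above `k` decay like `(1 - α (λ_k - λ_{k+1}) / (1 + α λ_k))^t`; since `z_k`
stays bounded, also `α λ_k ≤ 1`. Hence `δ_t = R_t - λ_k z_k²` decays geometrically, and the error
`v_t = λ_k (1 - z_k²)` obeys `|v_{t+1}| ≤ θ₁ |v_t| + E δ_t` with `θ₁ < 1`. Both then decay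
geometrically, and `|λ_k - R_t| ≤ |v_t| + δ_t`.
-/

open Matrix Finset

lemma dotProduct_mulVec_eq_mul_of_mulVec_eq_smul {n R : Type*} [Fintype n] [CommSemiring R]
    {C : Matrix n n R} (hC : C.IsSymm) {v : n → R} {μ : R} (hv : C *ᵥ v = μ • v) (w : n → R) :
    v ⬝ᵥ C *ᵥ w = μ * (v ⬝ᵥ w) := by
  rw [dotProduct_mulVec, ← mulVec_transpose, hC.eq, hv, smul_dotProduct, smul_eq_mul]

lemma orthonormal_of_dotProduct_eq_ite {n ι : Type*} [Fintype n] [DecidableEq ι]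
    {v : ι → EuclideanSpace ℝ n} (hv : ∀ i j, v i ⬝ᵥ (v j : n → ℝ) = if i = j then 1 else 0) :
    Orthonormal ℝ v := by
  rw [orthonormal_iff_ite]
  intro i j
  rw [EuclideanSpace.inner_eq_star_dotProduct, star_trivial, dotProduct_comm, hv]

lemma dotProduct_mulVec_self_eq_sum_s5 {n ι : Type*} [Fintype n] [Fintype ι]
    {C : Matrix n n ℝ} (hC : C.IsSymm) {v : ι → EuclideanSpace ℝ n} (hv : Orthonormal ℝ v)
    (hcard : Fintype.card ι = Fintype.card n) {μ : ι → ℝ}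
    (hCv : ∀ i, C *ᵥ v i = μ i • (v i : n → ℝ))
    (x : EuclideanSpace ℝ n) :
    x ⬝ᵥ C *ᵥ x = ∑ i, μ i * (v i ⬝ᵥ (x : n → ℝ)) ^ 2 := by
  let b : OrthonormalBasis ι ℝ (EuclideanSpace ℝ n) := .mk hv
    (hv.linearIndependent.span_eq_top_of_card_eq_finrank' (by simpa using hcard)).ge
  have hparseval := b.sum_inner_mul_inner x (WithLp.toLp 2 (C *ᵥ x))
  simp only [b, OrthonormalBasis.coe_mk, EuclideanSpace.inner_eq_star_dotProduct, star_trivial]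
    at hparseval
  rw [dotProduct_comm, ← hparseval]
  refine Finset.sum_congr rfl fun i _ => ?_
  rw [dotProduct_comm (C *ᵥ x), dotProduct_mulVec_eq_mul_of_mulVec_eq_smul hC (hCv i)]
  ring

lemma abs_dotProduct_le_norm {n : Type*} [Fintype n] {u x : EuclideanSpace ℝ n} (hu : ‖u‖ = 1) :
    |u ⬝ᵥ (x : n → ℝ)| ≤ ‖x‖ := by
  simpa [EuclideanSpace.inner_eq_star_dotProduct, dotProduct_comm, hu] using
    abs_real_inner_le_norm u x

lemma dotProduct_modifiedGHA_update {d : ℕ} {C : Matrix (Fin d) (Fin d) ℝ}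
    {q : ℕ → EuclideanSpace ℝ (Fin d)} {P : Finset ℕ} {l : ℕ} {lam α : ℝ}
    (x : EuclideanSpace ℝ (Fin d))
    (horth : ∀ p ∈ P, q l ⬝ᵥ (q p : Fin d → ℝ) = if l = p then 1 else 0)
    (hl : q l ⬝ᵥ C *ᵥ x = lam * (q l ⬝ᵥ (x : Fin d → ℝ))) :
    q l ⬝ᵥ ((x + α • (toE (C *ᵥ x) - (x ⬝ᵥ C *ᵥ x) • x
        - ∑ p ∈ P, (q p ⬝ᵥ C *ᵥ x) • q p) : EuclideanSpace ℝ (Fin d)) : Fin d → ℝ) =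
      (1 + α * (lam - x ⬝ᵥ C *ᵥ x) - if l ∈ P then α * lam else 0) * (q l ⬝ᵥ (x : Fin d → ℝ)) := by
  have hsum : ∑ p ∈ P, (q p ⬝ᵥ C *ᵥ x) * (q l ⬝ᵥ (q p : Fin d → ℝ)) =
      if l ∈ P then lam * (q l ⬝ᵥ (x : Fin d → ℝ)) else 0 := by
    rw [Finset.sum_congr rfl fun p hp => by rw [horth p hp, mul_ite, mul_one, mul_zero],
      Finset.sum_ite_eq, hl]
  simp only [toE, WithLp.ofLp_add, WithLp.ofLp_smul, WithLp.ofLp_sub, WithLp.ofLp_sum,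
    dotProduct_add, dotProduct_smul, dotProduct_sub, dotProduct_sum, hl, smul_eq_mul]
  rw [hsum]
  split_ifs <;> ring

lemma abs_le_pow_mul_abs_of_eq_mul {w σ : ℕ → ℝ} {θ : ℝ} (hθ : 0 ≤ θ)
    (hw : ∀ t, w (t + 1) = σ t * w t) (hσ : ∀ t, |σ t| ≤ θ) (t : ℕ) :
    |w t| ≤ θ ^ t * |w 0| :=
  le_geom (u := fun t => |w t|) hθ t fun n _ => by
    rw [hw, abs_mul]
    exact mul_le_mul_of_nonneg_right (hσ n) (abs_nonneg _)

lemma abs_le_pow_mul_abs_div_mul_abs_of_eq_mul {w y σ τ : ℕ → ℝ} {θ : ℝ} (hθ : 0 ≤ θ)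
    (hy : ∀ t, y t ≠ 0)
    (hw : ∀ t, w (t + 1) = σ t * w t) (hτ : ∀ t, y (t + 1) = τ t * y t)
    (hστ : ∀ t, |σ t| ≤ θ * |τ t|) (t : ℕ) :
    |w t| ≤ θ ^ t * |w 0 / y 0| * |y t| := by
  have hτ0 : ∀ t, τ t ≠ 0 := fun t hτt => hy (t + 1) (by rw [hτ, hτt, zero_mul])
  have hratio := abs_le_pow_mul_abs_of_eq_mul (w := fun t => w t / y t) (σ := fun t => σ t / τ t)
    hθ (fun t => by rw [hw, hτ]; field_simp [hτ0 t, hy t])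
    (fun t => by rw [abs_div, div_le_iff₀ (abs_pos.2 (hτ0 t))]; exact hστ t) t
  calc |w t| = |w t / y t| * |y t| := by rw [abs_div, div_mul_cancel₀ _ (abs_ne_zero.2 (hy t))]
    _ ≤ θ ^ t * |w 0 / y 0| * |y t| := mul_le_mul_of_nonneg_right hratio (abs_nonneg _)

lemma le_one_of_mul_abs_le_abs_succ {w : ℕ → ℝ} {c B : ℝ} (hw0 : w 0 ≠ 0)
    (hw : ∀ t, c * |w t| ≤ |w (t + 1)|) (hB : ∀ t, |w t| ≤ B) : c ≤ 1 := by
  by_contra! hc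
  obtain ⟨t, ht⟩ :=
    ((tendsto_atTop_of_geom_le (abs_pos.2 hw0) hc hw).eventually_gt_atTop B).exists
  exact (hB t).not_gt ht

lemma le_max_mul_pow_of_le_mul_add_mul_pow {u : ℕ → ℝ} {θ₁ θ₀ θ D : ℝ} (hθ₁ : 0 ≤ θ₁)
    (hθ₀ : 0 ≤ θ₀) (hD : 0 ≤ D) (hθ₁θ : θ₁ < θ) (hθ₀θ : θ₀ ≤ θ)
    (hu : ∀ t, u (t + 1) ≤ θ₁ * u t + D * θ₀ ^ t) (t : ℕ) :
    u t ≤ max (u 0) (D / (θ - θ₁)) * θ ^ t := by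
  set M := max (u 0) (D / (θ - θ₁))
  have hDM : D ≤ M * (θ - θ₁) := (div_le_iff₀ (by linarith)).1 (le_max_right _ _)
  induction t with
  | zero => simp [M]
  | succ n ih =>
    calc u (n + 1) ≤ θ₁ * u n + D * θ₀ ^ n := hu n
      _ ≤ θ₁ * (M * θ ^ n) + M * (θ - θ₁) * θ ^ n := by gcongr
      _ = M * θ ^ (n + 1) := by ring

lemma add_le_one_sub_div_mul_add {ρ a b g : ℝ} (hρ1 : ρ ≤ 1) (hb : 0 ≤ b)
    (hg : 0 ≤ g) (hab : a + g ≤ b) : ρ + a ≤ (1 - g / (1 + b)) * (ρ + b) := by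
  have h : g / (1 + b) * (ρ + b) ≤ g := by
    rw [div_mul_eq_mul_div, div_le_iff₀ (by linarith)]
    exact mul_le_mul_of_nonneg_left (by linarith) hg
  linarith [sub_mul 1 (g / (1 + b)) (ρ + b)]

lemma exists_sum_mul_sq_le_pow {ι : Type*} {s : Finset ι} {lam : ι → ℝ} {w : ℕ → ι → ℝ}
    {θ : ℝ} (hlam : ∀ l ∈ s, 0 ≤ lam l) (hw : ∀ l ∈ s, ∃ c, ∀ t, |w t l| ≤ c * θ ^ t) :
    ∃ D, ∀ t, ∑ l ∈ s, lam l * w t l ^ 2 ≤ D * (θ ^ 2) ^ t := by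
  choose! c hc using hw
  refine ⟨∑ l ∈ s, lam l * c l ^ 2, fun t => ?_⟩
  rw [sum_mul]
  refine sum_le_sum fun l hl => ?_
  calc lam l * w t l ^ 2 = lam l * |w t l| ^ 2 := by rw [sq_abs]
    _ ≤ lam l * (c l * θ ^ t) ^ 2 := by gcongr; exacts [hlam l hl, hc l hl t]
    _ = lam l * c l ^ 2 * (θ ^ 2) ^ t := by ring

lemma abs_one_sub_mul_le {α η r : ℝ} (hα : 0 ≤ α) (hηr : η ≤ r) (hr : α * r < 1) :
    |1 - α * r| ≤ 1 - α * η := by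
  rw [abs_of_pos (by linarith)]
  linarith [mul_le_mul_of_nonneg_left hηr hα]

lemma exists_abs_sub_mul_succ_le {R y δ : ℕ → ℝ} {lamk α A : ℝ} (hα : 0 ≤ α) (hlamk : 0 ≤ lamk)
    (hb : α * lamk ≤ 1) (hA : A < 1) (hR : ∀ t, 0 ≤ R t) (hRA : ∀ t, 1 - α * R t ≤ A)
    (hRα : ∀ t, α * R t < 1) (hRy : ∀ t, R t = lamk * y t + δ t) (hδ : ∀ t, 0 ≤ δ t)
    (hy : ∀ t, y (t + 1) = (1 + α * (lamk - R t)) ^ 2 * y t) :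
    ∃ θ ∈ Set.Ico (0 : ℝ) 1, ∃ E ≥ 0, ∀ t,
      |lamk - lamk * y (t + 1)| ≤ θ * |lamk - lamk * y t| + E * δ t := by
  set b := α * lamk
  have hb0 : 0 ≤ b := mul_nonneg hα hlamk
  have hαR : ∀ t, 0 ≤ α * R t := fun t => mul_nonneg hα (hR t)
  have hA0 : 0 ≤ A := by linarith [hRA 0, hRα 0]
  have hA2 : A ^ 2 < 1 := pow_lt_one₀ hA0 hA two_ne_zero
  have hrec : ∀ t, lamk - lamk * y (t + 1) =
      ((1 - α * R t) ^ 2 - b * (α * R t)) * (lamk - lamk * y t)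
        + b * δ t * (2 + α * (lamk - R t)) := by
    intro t
    rw [hy t, show δ t = R t - lamk * y t by linarith [hRy t]]
    ring
  have hcoef_le : ∀ t, (1 - α * R t) ^ 2 - b * (α * R t) ≤ A ^ 2 := fun t => by
    nlinarith [pow_le_pow_left₀ (by linarith [hRα t]) (hRA t) 2, mul_nonneg hb0 (hαR t)]
  have hcoef_ge : ∀ t, -b ≤ (1 - α * R t) ^ 2 - b * (α * R t) := fun t => by
    nlinarith [sq_nonneg (1 - α * R t), mul_le_mul_of_nonneg_left (hRα t).le hb0]
  have hforce : ∀ t, 0 ≤ b * δ t * (2 + α * (lamk - R t)) ∧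
      b * δ t * (2 + α * (lamk - R t)) ≤ b * (2 + b) * δ t := fun t => by
    have hbδ := mul_nonneg hb0 (hδ t)
    constructor <;> nlinarith [hRα t, hαR t]
  rcases hb.lt_or_eq with hb1 | hb1
  · refine ⟨max (A ^ 2) b, ⟨le_max_of_le_right hb0, max_lt hA2 hb1⟩, b * (2 + b), by positivity,
      fun t => ?_⟩
    have hcoef : |(1 - α * R t) ^ 2 - b * (α * R t)| ≤ max (A ^ 2) b :=
      abs_le.2 ⟨(neg_le_neg (le_max_right _ _)).trans (hcoef_ge t),
        (hcoef_le t).trans (le_max_left _ _)⟩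
    rw [hrec t]
    calc _ ≤ |(1 - α * R t) ^ 2 - b * (α * R t)| * |lamk - lamk * y t|
          + b * δ t * (2 + α * (lamk - R t)) :=
          (abs_add_le _ _).trans_eq (by rw [abs_mul, abs_of_nonneg (hforce t).1])
      _ ≤ max (A ^ 2) b * |lamk - lamk * y t| + b * (2 + b) * δ t :=
          add_le_add (by gcongr) (hforce t).2
  · -- when `α λ_k = 1`, the bound `α R_t < 1` forces `y_t < 1`, so the error keeps its sign
    have hv : ∀ t, 0 ≤ lamk - lamk * y t := fun t => by
      have hy1 : y t < 1 := by nlinarith [hRα t, hRy t, mul_nonneg hα (hδ t)]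
      nlinarith
    refine ⟨A ^ 2, ⟨sq_nonneg A, hA2⟩, b * (2 + b), by positivity, fun t => ?_⟩
    rw [abs_of_nonneg (hv _), abs_of_nonneg (hv _), hrec t]
    nlinarith [mul_le_mul_of_nonneg_right (hcoef_le t) (hv t), (hforce t).2]

section CoordinateDynamics

variable {ι : Type*} [LinearOrder ι] {s : Finset ι} {k : ι} {lam : ι → ℝ} {α η μ B : ℝ}
  {R : ℕ → ℝ} {z : ℕ → ι → ℝ}

lemma exists_abs_coord_le_pow (hk : k ∈ s) (hlam : ∀ l ∈ s, 0 ≤ lam l) (hμ : 0 ≤ μ)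
    (hμk : μ < lam k) (hgap : ∀ l ∈ s, k < l → lam l ≤ μ) (hα : 0 < α) (hη : 0 < η)
    (hηR : ∀ t, η < R t) (hRα : ∀ t, α * R t < 1)
    (hz : ∀ t, ∀ l ∈ s,
      z (t + 1) l = (1 + α * (lam l - R t) - if l < k then α * lam l else 0) * z t l)
    (hzk : z 0 k ≠ 0) (hB : ∀ t, |z t k| ≤ B) :
    ∃ θ ∈ Set.Ico (0 : ℝ) 1, ∀ l ∈ s, l ≠ k → ∃ c, ∀ t, |z t l| ≤ c * θ ^ t := by
  set θ₂ := 1 - α * (lam k - μ) / (1 + α * lam k)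
  have hA : |1 - α * R 0| ≤ 1 - α * η := abs_one_sub_mul_le hα.le (hηR 0).le (hRα 0)
  have hA1 : 1 - α * η < 1 := by linarith [mul_pos hα hη]
  have hθ₂ : 0 ≤ θ₂ ∧ θ₂ < 1 := by
    have hden : 0 < 1 + α * lam k := by nlinarith [hlam k hk]
    constructor
    · rw [sub_nonneg, div_le_one hden]; nlinarith
    · rw [sub_lt_self_iff]; exact div_pos (mul_pos hα (by linarith)) hden
  have hzk_succ : ∀ t, z (t + 1) k = (1 - α * R t + α * lam k) * z t k := fun t => by
    rw [hz t k hk, if_neg (lt_irrefl k)]; ring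
  have hpos : ∀ t, 0 < 1 - α * R t + α * lam k := fun t => by
    nlinarith [hRα t, hlam k hk]
  have hzk_ne : ∀ t, z t k ≠ 0 := by
    intro t
    induction t with
    | zero => exact hzk
    | succ n ih => rw [hzk_succ]; exact mul_ne_zero (hpos n).ne' ih
  have hθ₀ : 0 ≤ max (1 - α * η) θ₂ := le_max_of_le_right hθ₂.1
  refine ⟨max (1 - α * η) θ₂, ⟨hθ₀, max_lt hA1 hθ₂.2⟩, fun l hl hlk => ?_⟩
  rcases hlk.lt_or_gt with hlt | hgt
  · refine ⟨|z 0 l|, fun t => ?_⟩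
    calc |z t l| ≤ (1 - α * η) ^ t * |z 0 l| :=
          abs_le_pow_mul_abs_of_eq_mul (w := (z · l)) (σ := fun t => 1 - α * R t)
            ((abs_nonneg _).trans hA)
            (fun t => by rw [hz t l hl, if_pos hlt]; ring)
            (fun t => abs_one_sub_mul_le hα.le (hηR t).le (hRα t)) t
      _ ≤ |z 0 l| * max (1 - α * η) θ₂ ^ t := by
          rw [mul_comm]; gcongr
          exacts [(abs_nonneg _).trans hA, le_max_left _ _]
  · refine ⟨|z 0 l / z 0 k| * B, fun t => ?_⟩
    have hratio : ∀ t, |1 + α * (lam l - R t)| ≤ θ₂ * |1 - α * R t + α * lam k| := fun t => by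
      have hmain := add_le_one_sub_div_mul_add (ρ := 1 - α * R t) (a := α * lam l)
        (g := α * (lam k - μ)) (by nlinarith [hηR t]) (mul_nonneg hα.le (hlam k hk))
        (mul_nonneg hα.le (by linarith))
        (by nlinarith [hgap l hl hgt])
      rw [abs_of_pos (hpos t), abs_of_nonneg (by nlinarith [hRα t, hlam l hl])]
      linarith
    calc |z t l| ≤ θ₂ ^ t * |z 0 l / z 0 k| * |z t k| :=
          abs_le_pow_mul_abs_div_mul_abs_of_eq_mul (w := (z · l)) hθ₂.1 hzk_ne
            (fun t => by rw [hz t l hl, if_neg hgt.not_gt]; ring)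
            hzk_succ hratio t
      _ ≤ max (1 - α * η) θ₂ ^ t * |z 0 l / z 0 k| * B := by
          gcongr
          exacts [hθ₂.1, le_max_right _ _, hB t]
      _ = |z 0 l / z 0 k| * B * max (1 - α * η) θ₂ ^ t := by ring

theorem exists_abs_sub_le_pow_of_coord_dynamics (hk : k ∈ s) (hlam : ∀ l ∈ s, 0 ≤ lam l)
    (hμ : 0 ≤ μ) (hμk : μ < lam k) (hgap : ∀ l ∈ s, k < l → lam l ≤ μ) (hα : 0 < α)
    (hη : 0 < η) (hηR : ∀ t, η < R t) (hRα : ∀ t, α * R t < 1)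
    (hR : ∀ t, R t = ∑ l ∈ s, lam l * z t l ^ 2)
    (hz : ∀ t, ∀ l ∈ s,
      z (t + 1) l = (1 + α * (lam l - R t) - if l < k then α * lam l else 0) * z t l)
    (hzk : z 0 k ≠ 0) (hB : ∀ t, |z t k| ≤ B) :
    ∃ a > (0 : ℝ), ∃ θ ∈ Set.Ioo (0 : ℝ) 1, ∀ t, |lam k - R t| ≤ a * θ ^ t := by
  set δ := fun t => ∑ l ∈ s.erase k, lam l * z t l ^ 2
  have hδ : ∀ t, 0 ≤ δ t := fun t =>
    sum_nonneg fun l hl => mul_nonneg (hlam l (mem_of_mem_erase hl)) (sq_nonneg _)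
  have hRδ : ∀ t, R t = lam k * z t k ^ 2 + δ t := fun t => by rw [hR, ← add_sum_erase s _ hk]
  have hzk_succ : ∀ t, z (t + 1) k = (1 + α * (lam k - R t)) * z t k := fun t => by
    rw [hz t k hk, if_neg (lt_irrefl k), sub_zero]
  have hpos : ∀ t, 0 < 1 + α * (lam k - R t) := fun t => by
    nlinarith [hRα t, mul_nonneg hα.le (hlam k hk)]
  have hb : α * lam k ≤ 1 := le_one_of_mul_abs_le_abs_succ hzk (fun t => by
    rw [hzk_succ, abs_mul, abs_of_pos (hpos t)]
    nlinarith [hRα t, abs_nonneg (z t k)]) hB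
  obtain ⟨θ₀, hθ₀, hcoord⟩ :=
    exists_abs_coord_le_pow hk hlam hμ hμk hgap hα hη hηR hRα hz hzk hB
  obtain ⟨D, hδD⟩ := exists_sum_mul_sq_le_pow (fun l hl => hlam l (mem_of_mem_erase hl))
    fun l hl => hcoord l (mem_of_mem_erase hl) (ne_of_mem_erase hl)
  have hD : 0 ≤ D := by simpa using (hδ 0).trans (hδD 0)
  obtain ⟨θ₁, hθ₁, E, hE, hstep⟩ := exists_abs_sub_mul_succ_le (y := fun t => z t k ^ 2)
    hα.le (hlam k hk) hb (sub_lt_self 1 (mul_pos hα hη)) (fun t => (hη.trans (hηR t)).le)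
    (fun t => by nlinarith [hηR t]) hRα hRδ hδ fun t => by rw [hzk_succ]; ring
  obtain ⟨θ, hθlo, hθ1⟩ := exists_between (max_lt hθ₁.2 (pow_lt_one₀ hθ₀.1 hθ₀.2 two_ne_zero))
  have hθ₁θ : θ₁ < θ := (le_max_left _ _).trans_lt hθlo
  have hθ₀θ : θ₀ ^ 2 ≤ θ := (le_max_right _ _).trans hθlo.le
  have hθ : θ ∈ Set.Ioo (0 : ℝ) 1 := ⟨hθ₁.1.trans_lt hθ₁θ, hθ1⟩
  have herr := le_max_mul_pow_of_le_mul_add_mul_pow (u := fun t => |lam k - lam k * z t k ^ 2|)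
    hθ₁.1 (sq_nonneg θ₀) (mul_nonneg hE hD) hθ₁θ hθ₀θ
    fun t => (hstep t).trans (by rw [mul_assoc E]; gcongr; exact hδD t)
  set M := max |lam k - lam k * z 0 k ^ 2| (E * D / (θ - θ₁))
  refine ⟨M + D + 1, by positivity, θ, hθ, fun t => ?_⟩
  calc |lam k - R t| = |(lam k - lam k * z t k ^ 2) - δ t| := by rw [hRδ]; ring_nf
    _ ≤ |lam k - lam k * z t k ^ 2| + δ t :=
        (abs_sub _ _).trans_eq (by rw [abs_of_nonneg (hδ t)])
    _ ≤ M * θ ^ t + D * θ ^ t := by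
        gcongr
        · exact herr t
        · exact (hδD t).trans (by gcongr)
    _ ≤ (M + D + 1) * θ ^ t := by nlinarith [pow_pos hθ.1 t]

end CoordinateDynamics

theorem modified_GHA_rayleigh_convergence_general
    (d K : ℕ) (hKd : K < d)
    (C : Matrix (Fin d) (Fin d) ℝ) (hC : C.PosSemidef)
    (lam : ℕ → ℝ) (q : ℕ → EuclideanSpace ℝ (Fin d))
    (horth : ∀ l l', 1 ≤ l → l ≤ d → 1 ≤ l' → l' ≤ d →
      (q l) ⬝ᵥ (q l' : Fin d → ℝ) = if l = l' then 1 else 0)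
    (heig : ∀ l, 1 ≤ l → l ≤ d → C.mulVec (q l) = lam l • (q l : Fin d → ℝ))
    (hstrict : ∀ l l', 1 ≤ l → l < l' → l' ≤ d → l ≤ K → lam l' < lam l)
    (hmono : ∀ l l', 1 ≤ l → l ≤ l' → l' ≤ d → lam l' ≤ lam l)
    (hnonneg : ∀ l, 1 ≤ l → l ≤ d → 0 ≤ lam l)
    (k : ℕ) (hk1 : 1 ≤ k) (hkK : k ≤ K)
    (α : ℝ) (hα : 0 < α)
    (x : ℕ → EuclideanSpace ℝ (Fin d))
    (hiter : ∀ t, x (t + 1) = x t + α •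
      (toE (C.mulVec (x t)) - ((x t) ⬝ᵥ C.mulVec (x t)) • x t
        - ∑ p ∈ Finset.Icc 1 (k - 1), ((q p) ⬝ᵥ C.mulVec (x t)) • q p))
    (η : ℝ)
    (hηpos : 0 < η)
    (hinit : (q k) ⬝ᵥ (x 0 : Fin d → ℝ) ≠ 0)
    (hbound : ∀ t, ‖x t‖ ≤ Real.sqrt 3 ∧
      η < (x t) ⬝ᵥ C.mulVec (x t) ∧ (x t) ⬝ᵥ C.mulVec (x t) < 1 / α) :
    ∃ a₄ > (0:ℝ), ∃ θ ∈ Set.Ioo (0:ℝ) 1,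
      ∀ t, |lam k - (x t) ⬝ᵥ C.mulVec (x t)| ≤ a₄ * θ ^ t := by
  have hCsymm : C.IsSymm := isHermitian_iff_isSymm.1 hC.1
  have horth' : ∀ l ∈ Icc 1 d, ∀ l' ∈ Icc 1 d,
      q l ⬝ᵥ (q l' : Fin d → ℝ) = if l = l' then 1 else 0 := fun l hl l' hl' =>
    horth l l' (mem_Icc.1 hl).1 (mem_Icc.1 hl).2 (mem_Icc.1 hl').1 (mem_Icc.1 hl').2
  have heig' : ∀ l ∈ Icc 1 d, C *ᵥ q l = lam l • (q l : Fin d → ℝ) := fun l hl =>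
    heig l (mem_Icc.1 hl).1 (mem_Icc.1 hl).2
  have hon : Orthonormal ℝ fun l : Icc 1 d => q l :=
    orthonormal_of_dotProduct_eq_ite fun i j =>
      (horth' i i.2 j j.2).trans (if_congr Subtype.ext_iff.symm rfl rfl)
  have hk : k ∈ Icc 1 d := mem_Icc.2 ⟨hk1, by omega⟩
  refine exists_abs_sub_le_pow_of_coord_dynamics (z := fun t l => q l ⬝ᵥ (x t : Fin d → ℝ))
    (μ := lam (k + 1)) hk (fun l hl => hnonneg l (mem_Icc.1 hl).1 (mem_Icc.1 hl).2)
    (hnonneg _ (by omega) (by omega)) (hstrict k (k + 1) hk1 (by omega) (by omega) hkK)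
    (fun l hl hkl => hmono (k + 1) l (by omega) hkl (mem_Icc.1 hl).2) hα hηpos
    (fun t => (hbound t).2.1) (fun t => by linarith [(lt_div_iff₀ hα).1 (hbound t).2.2])
    (fun t => by
      rw [dotProduct_mulVec_self_eq_sum_s5 hCsymm hon (by simp) (fun l => heig' l l.2),
        sum_coe_sort (Icc 1 d) fun l => lam l * (q l ⬝ᵥ (x t : Fin d → ℝ)) ^ 2])
    (fun t l hl => by
      have hlk : l ∈ Icc 1 (k - 1) ↔ l < k := by simp only [mem_Icc] at hl ⊢; omega
      rw [hiter t, dotProduct_modifiedGHA_update _ (fun p hp => horth' l hl p (by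
          simp only [mem_Icc] at hp ⊢; omega))
        (dotProduct_mulVec_eq_mul_of_mulVec_eq_smul hCsymm (heig' l hl) _)]
      simp only [hlk])
    hinit fun t => (abs_dotProduct_le_norm (hon.norm_eq_one ⟨k, hk⟩)).trans (hbound t).1

/-- Lemma 5 of the paper: linear convergence of the Rayleigh
quotient of the modified GHA iterates to `λ_k`. -/
theorem modified_GHA_rayleigh_convergence
    (d K : ℕ) (hK1 : 1 ≤ K) (hKd : K < d)
    (C : Matrix (Fin d) (Fin d) ℝ) (hC : C.PosSemidef)
    (lam : ℕ → ℝ) (q : ℕ → EuclideanSpace ℝ (Fin d))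
    (horth : ∀ l l', 1 ≤ l → l ≤ d → 1 ≤ l' → l' ≤ d →
      (q l) ⬝ᵥ (q l' : Fin d → ℝ) = if l = l' then 1 else 0)
    (heig : ∀ l, 1 ≤ l → l ≤ d → C.mulVec (q l) = lam l • (q l : Fin d → ℝ))
    (hstrict : ∀ l l', 1 ≤ l → l < l' → l' ≤ d → l ≤ K → lam l' < lam l)
    (hmono : ∀ l l', 1 ≤ l → l ≤ l' → l' ≤ d → lam l' ≤ lam l)
    (hnonneg : ∀ l, 1 ≤ l → l ≤ d → 0 ≤ lam l)
    (hKpos : 0 < lam K)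
    (k : ℕ) (hk1 : 1 ≤ k) (hkK : k ≤ K)
    (α : ℝ) (hα : 0 < α)
    (x : ℕ → EuclideanSpace ℝ (Fin d))
    (hiter : ∀ t, x (t + 1) = x t + α •
      (toE (C.mulVec (x t)) - ((x t) ⬝ᵥ C.mulVec (x t)) • x t
        - ∑ p ∈ Finset.Icc 1 (k - 1), ((q p) ⬝ᵥ C.mulVec (x t)) • q p))
    -- `λ_m` : the smallest nonzero eigenvalue of `C`
    (m : ℕ) (hm1 : 1 ≤ m) (hmd : m ≤ d) (hmne : lam m ≠ 0)
    (hmsmall : ∀ l, 1 ≤ l → l ≤ d → lam l ≠ 0 → lam m ≤ lam l)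
    -- `η = min{(1 − 3αλ₁)² λ_m, (x̃_k^{(0)})ᵀ C x̃_k^{(0)}}`
    (η : ℝ)
    (hη : η = min ((1 - 3 * α * lam 1) ^ 2 * lam m)
        ((∑ l ∈ Finset.Icc k d, ((q l) ⬝ᵥ (x 0 : Fin d → ℝ)) • q l) ⬝ᵥ
          C.mulVec (∑ l ∈ Finset.Icc k d, ((q l) ⬝ᵥ (x 0 : Fin d → ℝ)) • q l)))
    (hηpos : 0 < η)
    (hinit : (q k) ⬝ᵥ (x 0 : Fin d → ℝ) ≠ 0)
    (hnorm0 : ‖x 0‖ = 1)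
    (hbound : ∀ t, ‖x t‖ ≤ Real.sqrt 3 ∧
      η < (x t) ⬝ᵥ C.mulVec (x t) ∧ (x t) ⬝ᵥ C.mulVec (x t) < 1 / α) :
    ∃ a₄ > (0:ℝ), ∃ θ ∈ Set.Ioo (0:ℝ) 1,
      ∀ t, |lam k - (x t) ⬝ᵥ C.mulVec (x t)| ≤ a₄ * θ ^ t :=
  modified_GHA_rayleigh_convergence_general d K hKd C hC lam q horth heig hstrict hmono hnonneg k
    hk1 hkK α hα x hiter η hηpos hinit hbound
end

section
/- Suppose (x_k^{(t)})ᵀ C x_k^{(t)} < λ_m and (x_k^{(t)})ᵀ C x_k^{(t)} < 1/α. Then the projected Rayleigh quotient is nondecreasing after one modified GHA step: (x̃_k^{(t+1)})ᵀ C x̃_k^{(t+1)} ≥ (1 + α(λ_m − (x_k^{(t)})ᵀ C x_k^{(t)}))² (x̃_k^{(t)})ᵀ C x̃_k^{(t)} ≥ (x̃_k^{(t)})ᵀ C x̃_k^{(t)}. -/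
/-!
For `l ≥ k` the deflation term of the update is orthogonal to `q_l` and `C` is symmetric, so one
step multiplies the coefficient `z_l = q_lᵀ x` by `1 + α (λ_l − xᵀCx)`. The projected Rayleigh
quotient is `∑_{l ≥ k} λ_l z_l²`; terms with `λ_l = 0` vanish and the others have `λ_l ≥ λ_m`,
so each term grows at least by the factor `(1 + α (λ_m − xᵀCx))² ≥ 1`.
-/

open Matrix Finset

section

variable {n ι R : Type*} [Fintype n] [CommRing R]

theorem Matrix.IsSymm.dotProduct_mulVec_of_mulVec_eq_smul_s8 {C : Matrix n n R} (hC : C.IsSymm)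
    {u : n → R} {μ : R} (hu : C *ᵥ u = μ • u) (w : n → R) : u ⬝ᵥ C *ᵥ w = μ * (u ⬝ᵥ w) := by
  rw [dotProduct_mulVec, ← mulVec_transpose, hC.eq, hu, smul_dotProduct, smul_eq_mul]

theorem dotProduct_mulVec_sum_smul_of_orthonormal_eigen [DecidableEq ι] {C : Matrix n n R}
    {v : ι → n → R} {μ : ι → R} {S : Finset ι}
    (horth : ∀ i ∈ S, ∀ j ∈ S, v i ⬝ᵥ v j = if i = j then 1 else 0)
    (heig : ∀ i ∈ S, C *ᵥ v i = μ i • v i) (a : ι → R) :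
    (∑ i ∈ S, a i • v i) ⬝ᵥ C *ᵥ (∑ i ∈ S, a i • v i) = ∑ i ∈ S, μ i * a i ^ 2 := by
  have hC : C *ᵥ (∑ i ∈ S, a i • v i) = ∑ i ∈ S, (a i * μ i) • v i := by
    rw [mulVec_sum]
    refine sum_congr rfl fun i hi => ?_
    rw [mulVec_smul, heig i hi, smul_smul]
  rw [hC, sum_dotProduct]
  refine sum_congr rfl fun i hi => ?_
  rw [dotProduct_sum, sum_eq_single_of_mem i hi fun j hj hji => by
    rw [smul_dotProduct, dotProduct_smul, horth i hi j hj, if_neg hji.symm, smul_zero, smul_zero]]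
  rw [smul_dotProduct, dotProduct_smul, horth i hi i hi, if_pos rfl, smul_eq_mul, smul_eq_mul]
  ring

theorem Matrix.IsSymm.dotProduct_deflated_step_of_eigen {C : Matrix n n R} (hC : C.IsSymm)
    {u : n → R} {μ : R} (hu : C *ᵥ u = μ • u) {v : ι → n → R} {S : Finset ι}
    (horth : ∀ p ∈ S, u ⬝ᵥ v p = 0) (α ρ : R) (b : ι → R) (x : n → R) :
    u ⬝ᵥ (x + α • (C *ᵥ x - ρ • x - ∑ p ∈ S, b p • v p)) = (1 + α * (μ - ρ)) * (u ⬝ᵥ x) := by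
  have hS : u ⬝ᵥ ∑ p ∈ S, b p • v p = 0 := by
    rw [dotProduct_sum]
    exact sum_eq_zero fun p hp => by rw [dotProduct_smul, horth p hp, smul_zero]
  rw [dotProduct_add, dotProduct_smul, dotProduct_sub, dotProduct_sub, hS,
    hC.dotProduct_mulVec_of_mulVec_eq_smul_s8 hu, dotProduct_smul, smul_eq_mul, smul_eq_mul]
  ring

end

theorem one_le_one_add_mul_sub {α ρ μ : ℝ} (hα : 0 ≤ α) (hρ : ρ ≤ μ) : 1 ≤ 1 + α * (μ - ρ) :=
  le_add_of_nonneg_right (mul_nonneg hα (sub_nonneg.mpr hρ))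

theorem sq_one_add_mul_sub_mul_le {α ρ μ₀ μ : ℝ} (hα : 0 ≤ α) (hρ : ρ ≤ μ₀) (hμ : 0 ≤ μ)
    (hμ₀ : μ ≠ 0 → μ₀ ≤ μ) (a : ℝ) :
    (1 + α * (μ₀ - ρ)) ^ 2 * (μ * a ^ 2) ≤ μ * ((1 + α * (μ - ρ)) * a) ^ 2 := by
  rcases eq_or_ne μ 0 with rfl | hne
  · simp
  have h₀ := one_le_one_add_mul_sub hα hρ
  have hμ₀μ := hμ₀ hne
  calc (1 + α * (μ₀ - ρ)) ^ 2 * (μ * a ^ 2) ≤ (1 + α * (μ - ρ)) ^ 2 * (μ * a ^ 2) := by gcongr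
    _ = μ * ((1 + α * (μ - ρ)) * a) ^ 2 := by ring

theorem modified_GHA_projected_rayleigh_monotone_general
    (d : ℕ)
    (C : Matrix (Fin d) (Fin d) ℝ) (hC : C.PosSemidef)
    (lam : ℕ → ℝ) (q : ℕ → EuclideanSpace ℝ (Fin d))
    (horth : ∀ l l', 1 ≤ l → l ≤ d → 1 ≤ l' → l' ≤ d →
      (q l) ⬝ᵥ (q l' : Fin d → ℝ) = if l = l' then 1 else 0)
    (heig : ∀ l, 1 ≤ l → l ≤ d → C.mulVec (q l) = lam l • (q l : Fin d → ℝ))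
    (hnonneg : ∀ l, 1 ≤ l → l ≤ d → 0 ≤ lam l)
    (k : ℕ) (hk1 : 1 ≤ k)
    (α : ℝ) (hα : 0 < α)
    (x : ℕ → EuclideanSpace ℝ (Fin d))
    (hiter : ∀ t, x (t + 1) = x t + α •
      (toE (C.mulVec (x t)) - ((x t) ⬝ᵥ C.mulVec (x t)) • x t
        - ∑ p ∈ Finset.Icc 1 (k - 1), ((q p) ⬝ᵥ C.mulVec (x t)) • q p))
    -- `λ_m` : the smallest nonzero eigenvalue of `C`
    (m : ℕ)
    (hmsmall : ∀ l, 1 ≤ l → l ≤ d → lam l ≠ 0 → lam m ≤ lam l)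
    -- the projection `x̃_k^{(t)}` of `x_k^{(t)}` onto `span{q_k, …, q_d}`
    (xt : ℕ → EuclideanSpace ℝ (Fin d))
    (hxt : ∀ t, xt t = ∑ l ∈ Finset.Icc k d, ((q l) ⬝ᵥ (x t : Fin d → ℝ)) • q l)
    (t : ℕ)
    (hray_m : (x t) ⬝ᵥ C.mulVec (x t) < lam m) :
    (1 + α * (lam m - (x t) ⬝ᵥ C.mulVec (x t))) ^ 2 * ((xt t) ⬝ᵥ C.mulVec (xt t)) ≤
        (xt (t + 1)) ⬝ᵥ C.mulVec (xt (t + 1)) ∧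
      (xt t) ⬝ᵥ C.mulVec (xt t) ≤
        (1 + α * (lam m - (x t) ⬝ᵥ C.mulVec (x t))) ^ 2 * ((xt t) ⬝ᵥ C.mulVec (xt t)) := by
  set ρ := (x t) ⬝ᵥ C.mulVec (x t)
  set z : ℕ → ℝ := fun l => (q l) ⬝ᵥ (x t : Fin d → ℝ)
  have hIcc : ∀ l ∈ Icc k d, 1 ≤ l ∧ l ≤ d := fun l hl => by grind
  have horth' : ∀ l ∈ Icc k d, ∀ l' ∈ Icc k d,
      (q l) ⬝ᵥ (q l' : Fin d → ℝ) = if l = l' then 1 else 0 := fun l hl l' hl' =>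
    horth l l' (hIcc l hl).1 (hIcc l hl).2 (hIcc l' hl').1 (hIcc l' hl').2
  have heig' : ∀ l ∈ Icc k d, C *ᵥ (q l : Fin d → ℝ) = lam l • (q l : Fin d → ℝ) :=
    fun l hl => heig l (hIcc l hl).1 (hIcc l hl).2
  have hsymm : C.IsSymm := isHermitian_iff_isSymm.mp hC.1
  have hstep : ∀ l ∈ Icc k d,
      (q l) ⬝ᵥ (x (t + 1) : Fin d → ℝ) = (1 + α * (lam l - ρ)) * z l := by
    intro l hl
    rw [hiter t]
    simp only [toE, WithLp.ofLp_add, WithLp.ofLp_sub, WithLp.ofLp_smul, WithLp.ofLp_sum]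
    refine hsymm.dotProduct_deflated_step_of_eigen (heig' l hl) (fun p hp => ?_) _ _ _ _
    obtain ⟨hp1, hpk⟩ := mem_Icc.mp hp
    rw [horth l p (hIcc l hl).1 (hIcc l hl).2 hp1 (by grind), if_neg (by grind)]
  have hR₀ : (xt t) ⬝ᵥ C.mulVec (xt t) = ∑ l ∈ Icc k d, lam l * z l ^ 2 := by
    rw [hxt t]
    simp only [WithLp.ofLp_sum, WithLp.ofLp_smul]
    exact dotProduct_mulVec_sum_smul_of_orthonormal_eigen horth' heig' z
  have hR₁ : (xt (t + 1)) ⬝ᵥ C.mulVec (xt (t + 1))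
      = ∑ l ∈ Icc k d, lam l * ((1 + α * (lam l - ρ)) * z l) ^ 2 := by
    rw [hxt (t + 1)]
    simp only [WithLp.ofLp_sum, WithLp.ofLp_smul]
    rw [dotProduct_mulVec_sum_smul_of_orthonormal_eigen horth' heig']
    exact sum_congr rfl fun l hl => by rw [hstep l hl]
  have hlam : ∀ l ∈ Icc k d, 0 ≤ lam l := fun l hl => hnonneg l (hIcc l hl).1 (hIcc l hl).2
  refine ⟨?_, ?_⟩
  · rw [hR₀, hR₁, mul_sum]
    exact sum_le_sum fun l hl => sq_one_add_mul_sub_mul_le hα.le hray_m.le (hlam l hl)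
      (hmsmall l (hIcc l hl).1 (hIcc l hl).2) (z l)
  · rw [hR₀]
    exact le_mul_of_one_le_left (sum_nonneg fun l hl => mul_nonneg (hlam l hl) (sq_nonneg _))
      (one_le_pow₀ (one_le_one_add_mul_sub hα.le hray_m.le))

/-- monotonicity of the projected Rayleigh quotient of the modified
GHA, where `x̃_k^{(t)} = Σ_{l=k}^{d} (q_lᵀ x_k^{(t)}) q_l` is the projection of
`x_k^{(t)}` onto `span{q_k, …, q_d}`: if `xᵀCx < λ_m` and `xᵀCx < 1/α`, then
`(x̃^{(t+1)})ᵀ C x̃^{(t+1)} ≥ (1 + α(λ_m − xᵀCx))² (x̃^{(t)})ᵀ C x̃^{(t)} ≥ (x̃^{(t)})ᵀ C x̃^{(t)}`. -/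
theorem modified_GHA_projected_rayleigh_monotone
    (d K : ℕ) (hK1 : 1 ≤ K) (hKd : K < d)
    (C : Matrix (Fin d) (Fin d) ℝ) (hC : C.PosSemidef)
    (lam : ℕ → ℝ) (q : ℕ → EuclideanSpace ℝ (Fin d))
    (horth : ∀ l l', 1 ≤ l → l ≤ d → 1 ≤ l' → l' ≤ d →
      (q l) ⬝ᵥ (q l' : Fin d → ℝ) = if l = l' then 1 else 0)
    (heig : ∀ l, 1 ≤ l → l ≤ d → C.mulVec (q l) = lam l • (q l : Fin d → ℝ))
    (hstrict : ∀ l l', 1 ≤ l → l < l' → l' ≤ d → l ≤ K → lam l' < lam l)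
    (hmono : ∀ l l', 1 ≤ l → l ≤ l' → l' ≤ d → lam l' ≤ lam l)
    (hnonneg : ∀ l, 1 ≤ l → l ≤ d → 0 ≤ lam l)
    (hKpos : 0 < lam K)
    (k : ℕ) (hk1 : 1 ≤ k) (hkK : k ≤ K)
    (α : ℝ) (hα : 0 < α)
    (x : ℕ → EuclideanSpace ℝ (Fin d))
    (hiter : ∀ t, x (t + 1) = x t + α •
      (toE (C.mulVec (x t)) - ((x t) ⬝ᵥ C.mulVec (x t)) • x t
        - ∑ p ∈ Finset.Icc 1 (k - 1), ((q p) ⬝ᵥ C.mulVec (x t)) • q p))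
    -- `λ_m` : the smallest nonzero eigenvalue of `C`
    (m : ℕ) (hm1 : 1 ≤ m) (hmd : m ≤ d) (hmne : lam m ≠ 0)
    (hmsmall : ∀ l, 1 ≤ l → l ≤ d → lam l ≠ 0 → lam m ≤ lam l)
    -- the projection `x̃_k^{(t)}` of `x_k^{(t)}` onto `span{q_k, …, q_d}`
    (xt : ℕ → EuclideanSpace ℝ (Fin d))
    (hxt : ∀ t, xt t = ∑ l ∈ Finset.Icc k d, ((q l) ⬝ᵥ (x t : Fin d → ℝ)) • q l)
    (t : ℕ)
    (hray_m : (x t) ⬝ᵥ C.mulVec (x t) < lam m)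
    (hray_ub : (x t) ⬝ᵥ C.mulVec (x t) < 1 / α) :
    (1 + α * (lam m - (x t) ⬝ᵥ C.mulVec (x t))) ^ 2 * ((xt t) ⬝ᵥ C.mulVec (xt t)) ≤
        (xt (t + 1)) ⬝ᵥ C.mulVec (xt (t + 1)) ∧
      (xt t) ⬝ᵥ C.mulVec (xt t) ≤
        (1 + α * (lam m - (x t) ⬝ᵥ C.mulVec (x t))) ^ 2 * ((xt t) ⬝ᵥ C.mulVec (xt t)) :=
  modified_GHA_projected_rayleigh_monotone_general d C hC lam q horth heig hnonneg k hk1 α hα x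
    hiter m hmsmall xt hxt t hray_m
end

section
/- Fix a node i and k ∈ {1,...,K}, and let λ_{i,1} denote the largest eigenvalue of C_i. If the local vectors satisfy ‖x_{i,p}‖² ≤ 3 for all p = 1, ..., k, then the local Sanger direction satisfies ‖H_i(x_{i,k})‖² ≤ 3 λ_{i,1}² (3k−2)(3k+1). -/
open Matrix Finset

/-- The local Sanger direction for the `k`-th vector, computed from the family
`y 1, …, y k` of local vectors:
`H(y k) = C y_k − (y_kᵀ C y_k) y_k − Σ_{p=1}^{k−1} (y_pᵀ C y_k) y_p`. -/
noncomputable def sangerDir {d : ℕ} (C : Matrix (Fin d) (Fin d) ℝ)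
    (y : ℕ → EuclideanSpace ℝ (Fin d)) (k : ℕ) : EuclideanSpace ℝ (Fin d) :=
  toE (C.mulVec (y k)) - ((y k) ⬝ᵥ C.mulVec (y k)) • y k
    - ∑ p ∈ Finset.Icc 1 (k - 1), ((y p) ⬝ᵥ C.mulVec (y k)) • y p

open scoped RealInnerProductSpace
open Module.End

section
variable {E ι : Type*} [NormedAddCommGroup E] [InnerProductSpace ℝ E]

theorem LinearMap.IsSymmetric.norm_apply_sq_le [FiniteDimensional ℝ E] {T : E →ₗ[ℝ] E}
    (hT : T.IsSymmetric) {r : ℝ} (hr : ∀ μ, HasEigenvalue T μ → |μ| ≤ r) (v : E) :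
    ‖T v‖ ^ 2 ≤ r ^ 2 * ‖v‖ ^ 2 := by
  have hn : Module.finrank ℝ E = Module.finrank ℝ E := rfl
  set b := hT.eigenvectorBasis hn
  have hμ (i) : (hT.eigenvalues hn i) ^ 2 ≤ r ^ 2 :=
    sq_le_sq.2 ((hr _ (hT.hasEigenvalue_eigenvalues hn i)).trans (le_abs_self r))
  rw [← b.repr.norm_map, ← b.repr.norm_map v, EuclideanSpace.norm_sq_eq,
    EuclideanSpace.norm_sq_eq, Finset.mul_sum]
  refine Finset.sum_le_sum fun i _ => ?_
  rw [hT.eigenvectorBasis_apply_self_apply, norm_mul, mul_pow, Real.norm_eq_abs, sq_abs]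
  exact mul_le_mul_of_nonneg_right (hμ i) (sq_nonneg _)

theorem LinearMap.IsPositive.norm_apply_sq_le [FiniteDimensional ℝ E] {T : E →ₗ[ℝ] E}
    (hT : T.IsPositive) {r : ℝ} (hr : ∀ μ, HasEigenvalue T μ → μ ≤ r) (v : E) :
    ‖T v‖ ^ 2 ≤ r ^ 2 * ‖v‖ ^ 2 :=
  hT.isSymmetric.norm_apply_sq_le (fun μ hμ =>
    (abs_of_nonneg (eigenvalue_nonneg_of_nonneg hμ hT.re_inner_nonneg_right)).trans_le (hr μ hμ)) v

theorem norm_sum_smul_sq_le (s : Finset ι) (c : ι → ℝ) (x : ι → E) :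
    ‖∑ p ∈ s, c p • x p‖ ^ 2 ≤ (∑ p ∈ s, c p ^ 2) * ∑ p ∈ s, ‖x p‖ ^ 2 := by
  calc ‖∑ p ∈ s, c p • x p‖ ^ 2 ≤ (∑ p ∈ s, |c p| * ‖x p‖) ^ 2 := by
        gcongr
        exact (norm_sum_le _ _).trans_eq (by simp [norm_smul])
    _ ≤ (∑ p ∈ s, |c p| ^ 2) * ∑ p ∈ s, ‖x p‖ ^ 2 := sum_mul_sq_le_sq_mul_sq _ _ _
    _ = (∑ p ∈ s, c p ^ 2) * ∑ p ∈ s, ‖x p‖ ^ 2 := by simp only [sq_abs]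

theorem sum_inner_sq_le (s : Finset ι) (x : ι → E) (v : E) :
    ∑ p ∈ s, ⟪x p, v⟫ ^ 2 ≤ (∑ p ∈ s, ‖x p‖ ^ 2) * ‖v‖ ^ 2 := by
  rw [Finset.sum_mul]
  refine Finset.sum_le_sum fun p _ => ?_
  rw [← mul_pow, ← sq_abs]
  gcongr
  exact abs_real_inner_le_norm _ _

theorem norm_sub_sum_inner_smul_sq (s : Finset ι) (x : ι → E) (v : E) :
    ‖v - ∑ p ∈ s, ⟪x p, v⟫ • x p‖ ^ 2
      = ‖v‖ ^ 2 - 2 * ∑ p ∈ s, ⟪x p, v⟫ ^ 2 + ‖∑ p ∈ s, ⟪x p, v⟫ • x p‖ ^ 2 := by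
  rw [norm_sub_sq_real, inner_sum]
  simp only [real_inner_smul_right, real_inner_comm v, sq]

theorem norm_sub_sum_inner_smul_sq_le (s : Finset ι) (x : ι → E) (v : E) {M : ℝ}
    (hM : 2 ≤ M) (hx : ∑ p ∈ s, ‖x p‖ ^ 2 ≤ M) :
    ‖v - ∑ p ∈ s, ⟪x p, v⟫ • x p‖ ^ 2 ≤ (M - 1) ^ 2 * ‖v‖ ^ 2 := by
  have hS := norm_sum_smul_sq_le s (fun p => ⟪x p, v⟫) x
  have hQ := sum_inner_sq_le s x v
  rw [norm_sub_sum_inner_smul_sq]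
  set Q := ∑ p ∈ s, ⟪x p, v⟫ ^ 2
  set N := ∑ p ∈ s, ‖x p‖ ^ 2
  have hQ₀ : 0 ≤ Q := Finset.sum_nonneg fun p _ => sq_nonneg _
  suffices (N - 2) * Q ≤ (M - 2) * M * ‖v‖ ^ 2 by nlinarith
  rcases le_total N 2 with hN | hN
  · have : 0 ≤ (M - 2) * M * ‖v‖ ^ 2 := by
      have := sub_nonneg.2 hM
      positivity
    nlinarith [mul_nonpos_of_nonpos_of_nonneg (sub_nonpos.2 hN) hQ₀]
  · calc (N - 2) * Q ≤ (N - 2) * (N * ‖v‖ ^ 2) := by gcongr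
      _ ≤ (M - 2) * M * ‖v‖ ^ 2 := by
        rw [← mul_assoc]
        gcongr

end

theorem sangerDir_eq_sub_sum {d : ℕ} (C : Matrix (Fin d) (Fin d) ℝ)
    (y : ℕ → EuclideanSpace ℝ (Fin d)) {k : ℕ} (hk : 1 ≤ k) :
    sangerDir C y k = toEuclideanLin C (y k)
      - ∑ p ∈ Icc 1 k, ⟪y p, toEuclideanLin C (y k)⟫ • y p := by
  have hinner (p : ℕ) : ⟪y p, toEuclideanLin C (y k)⟫ = y p ⬝ᵥ C *ᵥ y k := by
    simp [EuclideanSpace.inner_eq_star_dotProduct, dotProduct_comm]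
  obtain ⟨m, rfl⟩ : ∃ m, k = m + 1 := ⟨k - 1, by omega⟩
  rw [sangerDir, Finset.sum_Icc_succ_top hk, Nat.add_sub_cancel]
  simp only [hinner]
  rw [sub_add_eq_sub_sub_swap]
  rfl

theorem sanger_direction_norm_bound_general
    (d : ℕ)
    (Ci : Matrix (Fin d) (Fin d) ℝ) (hCi : Ci.PosSemidef)
    -- `λ_{i,1}` : the largest eigenvalue of `C_i`
    (lam1 : ℝ)
    (hMax : ∀ μ, Module.End.HasEigenvalue (Matrix.toEuclideanLin Ci) μ → μ ≤ lam1)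
    (k : ℕ) (hk1 : 1 ≤ k)
    (x : ℕ → EuclideanSpace ℝ (Fin d))
    (hxb : ∀ p, 1 ≤ p → p ≤ k → ‖x p‖ ^ 2 ≤ 3) :
    ‖sangerDir Ci x k‖ ^ 2 ≤ 3 * lam1 ^ 2 * (3 * (k : ℝ) - 2) * (3 * (k : ℝ) + 1) := by
  have hk : (1 : ℝ) ≤ k := by exact_mod_cast hk1
  have hx : ∑ p ∈ Icc 1 k, ‖x p‖ ^ 2 ≤ 3 * k := by
    simpa [mul_comm] using
      Finset.sum_le_card_nsmul _ _ 3 fun p hp => hxb p (mem_Icc.1 hp).1 (mem_Icc.1 hp).2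
  have hCx : ‖toEuclideanLin Ci (x k)‖ ^ 2 ≤ 3 * lam1 ^ 2 := calc
    _ ≤ lam1 ^ 2 * ‖x k‖ ^ 2 :=
      (isPositive_toEuclideanLin_iff.2 hCi).norm_apply_sq_le hMax (x k)
    _ ≤ lam1 ^ 2 * 3 := by gcongr; exact hxb k hk1 le_rfl
    _ = 3 * lam1 ^ 2 := mul_comm _ _
  rw [sangerDir_eq_sub_sum Ci x hk1]
  calc _ ≤ (3 * k - 1) ^ 2 * ‖toEuclideanLin Ci (x k)‖ ^ 2 :=
        norm_sub_sum_inner_smul_sq_le _ _ _ (by linarith) hx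
    _ ≤ (3 * k - 1) ^ 2 * (3 * lam1 ^ 2) := by gcongr
    _ ≤ 3 * lam1 ^ 2 * (3 * k - 2) * (3 * k + 1) := by nlinarith [sq_nonneg lam1]

/-- Lemma 7 of the paper: if the local vectors satisfy
`‖x_{i,p}‖² ≤ 3` for `p = 1, …, k`, then the local Sanger direction satisfies
`‖H_i(x_{i,k})‖² ≤ 3 λ_{i,1}² (3k−2)(3k+1)`, where `λ_{i,1}` is the largest
eigenvalue of the positive semidefinite local covariance matrix `C_i`. -/
theorem sanger_direction_norm_bound
    (d K : ℕ) (hK1 : 1 ≤ K)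
    (Ci : Matrix (Fin d) (Fin d) ℝ) (hCi : Ci.PosSemidef)
    -- `λ_{i,1}` : the largest eigenvalue of `C_i`
    (lam1 : ℝ)
    (hEig : Module.End.HasEigenvalue (Matrix.toEuclideanLin Ci) lam1)
    (hMax : ∀ μ, Module.End.HasEigenvalue (Matrix.toEuclideanLin Ci) μ → μ ≤ lam1)
    (k : ℕ) (hk1 : 1 ≤ k) (hkK : k ≤ K)
    (x : ℕ → EuclideanSpace ℝ (Fin d))
    (hxb : ∀ p, 1 ≤ p → p ≤ k → ‖x p‖ ^ 2 ≤ 3) :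
    ‖sangerDir Ci x k‖ ^ 2 ≤ 3 * lam1 ^ 2 * (3 * (k : ℝ) - 2) * (3 * (k : ℝ) + 1) :=
  sanger_direction_norm_bound_general d Ci hCi lam1 hMax k hk1 x hxb
end
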